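/- Under the standard positivity assumptions (G ⪰ 0, R_k ⪰ δI, Q_k − L_kᵀR_k⁻¹L_k ⪰ 0 for all k), the backward Riccati recursion T_N = G, T_k = Δ(T_{k+1}) − Λ(T_{k+1})ᵀ Υ(T_{k+1})⁻¹ Λ(T_{k+1}), where Υ(T) = R + BᵀE[T|F_{k−1}]B + BᵀE[Tω|F_{k−1}]E + EᵀE[Tω|F_{k−1}]B + EᵀE[Tω²|F_{k−1}]E, Λ(T) = L + BᵀE[T|F_{k−1}]A + EᵀE[Tω|F_{k−1}]A + BᵀE[Tω|F_{k−1}]D + EᵀE[Tω²|F_{k−1}]D, and Δ(T) = Q + AᵀE[T|F_{k−1}]A + AᵀE[Tω|F_{k−1}]D + DᵀE[Tω|F_{k−1}]A + DᵀE[Tω²|F_{k−1}]D, produces symmetric positive semidefinite matrices T_k ⪰ 0 and Υ(T_{k+1}) ⪰ δI for all k; in particular the recursion is well-defined (Υ is invertible at each step). -/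

import Mathlib

open Matrix MeasureTheory Finset

/-! The conditional moments `E[T|F]`, `E[ωT|F]`, `E[ω²T|F]` are the blocks of
`K = E[(1, ω)ᵀ (1, ω) ⊗ T | F]`, which is positive semidefinite when `T` is. With `S = (B; E)` and
`S' = (A; D)` one has `Υ = R + SᵀKS`, `Λ = L + SᵀKS'`, `Δ = Q + S'ᵀKS'`, so
`[[Δ, Λᵀ], [Λ, Υ]] = [[Q, Lᵀ], [L, R]] + WᵀKW` with `W = (S' S)`. The first summand is positive
semidefinite because its Schur complement `Q - LᵀR⁻¹L` is, hence so is the sum, and then so is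
its Schur complement `Δ - ΛᵀΥ⁻¹Λ = T_k`. Backward induction from `T_N = G` concludes. -/

/-- Entrywise conditional expectation of a random matrix. -/
noncomputable def cexpM {Ω : Type} {m0 : MeasurableSpace Ω} (μ : Measure Ω)
    (G : MeasurableSpace Ω) {a b : ℕ} (T : Ω → Matrix (Fin a) (Fin b) ℝ) :
    Ω → Matrix (Fin a) (Fin b) ℝ :=
  fun w => Matrix.of fun i j => (μ[fun v => T v i j | G]) w

/-- `Υ(T) = R + BᵀE[T|F]B + BᵀE[Tω|F]E + EᵀE[Tω|F]B + EᵀE[Tω²|F]E`. -/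
noncomputable def UpsOp {Ω : Type} {m0 : MeasurableSpace Ω} (μ : Measure Ω)
    (G : MeasurableSpace Ω) {n m : ℕ} (wn : Ω → ℝ) (R : Ω → Matrix (Fin m) (Fin m) ℝ)
    (B E : Ω → Matrix (Fin n) (Fin m) ℝ) (T : Ω → Matrix (Fin n) (Fin n) ℝ) :
    Ω → Matrix (Fin m) (Fin m) ℝ := fun w =>
  R w + (B w)ᵀ * cexpM μ G T w * B w
    + (B w)ᵀ * cexpM μ G (fun v => wn v • T v) w * E w
    + (E w)ᵀ * cexpM μ G (fun v => wn v • T v) w * B w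
    + (E w)ᵀ * cexpM μ G (fun v => wn v ^ 2 • T v) w * E w

/-- `Λ(T) = L + BᵀE[T|F]A + EᵀE[Tω|F]A + BᵀE[Tω|F]D + EᵀE[Tω²|F]D`. -/
noncomputable def LamOp {Ω : Type} {m0 : MeasurableSpace Ω} (μ : Measure Ω)
    (G : MeasurableSpace Ω) {n m : ℕ} (wn : Ω → ℝ) (L : Ω → Matrix (Fin m) (Fin n) ℝ)
    (A D : Ω → Matrix (Fin n) (Fin n) ℝ) (B E : Ω → Matrix (Fin n) (Fin m) ℝ)
    (T : Ω → Matrix (Fin n) (Fin n) ℝ) : Ω → Matrix (Fin m) (Fin n) ℝ := fun w =>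
  L w + (B w)ᵀ * cexpM μ G T w * A w
    + (E w)ᵀ * cexpM μ G (fun v => wn v • T v) w * A w
    + (B w)ᵀ * cexpM μ G (fun v => wn v • T v) w * D w
    + (E w)ᵀ * cexpM μ G (fun v => wn v ^ 2 • T v) w * D w

/-- `Δ(T) = Q + AᵀE[T|F]A + AᵀE[Tω|F]D + DᵀE[Tω|F]A + DᵀE[Tω²|F]D`. -/
noncomputable def DelOp {Ω : Type} {m0 : MeasurableSpace Ω} (μ : Measure Ω)
    (G : MeasurableSpace Ω) {n : ℕ} (wn : Ω → ℝ) (Q : Ω → Matrix (Fin n) (Fin n) ℝ)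
    (A D : Ω → Matrix (Fin n) (Fin n) ℝ) (T : Ω → Matrix (Fin n) (Fin n) ℝ) :
    Ω → Matrix (Fin n) (Fin n) ℝ := fun w =>
  Q w + (A w)ᵀ * cexpM μ G T w * A w
    + (A w)ᵀ * cexpM μ G (fun v => wn v • T v) w * D w
    + (D w)ᵀ * cexpM μ G (fun v => wn v • T v) w * A w
    + (D w)ᵀ * cexpM μ G (fun v => wn v ^ 2 • T v) w * D w

namespace Matrix

variable {ι κ : Type*} [Fintype ι] [Fintype κ]

theorem posSemidef_of_forall_ratCast_dotProduct_mulVec_nonneg {M : Matrix ι ι ℝ}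
    (hM : M.IsHermitian)
    (h : ∀ x : ι → ℚ, 0 ≤ (fun i => (x i : ℝ)) ⬝ᵥ (M *ᵥ fun i => (x i : ℝ))) : M.PosSemidef := by
  refine .of_dotProduct_mulVec_nonneg hM fun y => ?_
  have hdense : DenseRange fun (x : ι → ℚ) i => (x i : ℝ) :=
    DenseRange.piMap fun _ => Rat.denseRange_cast
  exact hdense.induction_on (p := fun y => 0 ≤ star y ⬝ᵥ (M *ᵥ y)) y
    (isClosed_le continuous_const (by fun_prop)) h

omit [Fintype ι] in
theorem posDef_of_posSemidef_sub_smul_one [Finite ι] [DecidableEq ι] {M : Matrix ι ι ℝ} {δ : ℝ}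
    (hδ : 0 < δ) (h : (M - δ • 1).PosSemidef) : M.PosDef := by
  simpa using PosDef.posSemidef_add h (PosDef.one.smul hδ)

theorem posSemidef_fromBlocks_smul {M : Matrix ι ι ℝ} (hM : M.PosSemidef) (a : ℝ) :
    (fromBlocks M (a • M) (a • M) (a ^ 2 • M)).PosSemidef := by
  classical
  set C : Matrix ι (ι ⊕ ι) ℝ := fromCols 1 (a • 1)
  have h : Cᴴ * M * C = fromBlocks M (a • M) (a • M) (a ^ 2 • M) := by
    rw [conjTranspose_fromCols_eq_fromRows_conjTranspose, fromRows_mul, fromRows_mul_fromCols]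
    simp [sq, mul_smul]
  exact h ▸ hM.conjTranspose_mul_mul_same _

theorem transpose_fromRows_mul_fromBlocks_mul_fromRows {R : Type*} [CommRing R]
    {m n : Type*} (X₁ X₂ : Matrix ι m R) (M₁₁ M₁₂ M₂₁ M₂₂ : Matrix ι ι R)
    (Y₁ Y₂ : Matrix ι n R) :
    (fromRows X₁ X₂)ᵀ * fromBlocks M₁₁ M₁₂ M₂₁ M₂₂ * fromRows Y₁ Y₂ =
      X₁ᵀ * M₁₁ * Y₁ + X₁ᵀ * M₁₂ * Y₂ + X₂ᵀ * M₂₁ * Y₁ + X₂ᵀ * M₂₂ * Y₂ := by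
  simp only [transpose_fromRows, fromCols_mul_fromBlocks, fromCols_mul_fromRows, Matrix.add_mul,
    Matrix.mul_assoc]
  abel

theorem fromBlocks_posSemidef_of_schur [DecidableEq κ] {Q : Matrix ι ι ℝ} {L : Matrix κ ι ℝ}
    {R : Matrix κ κ ℝ} (hR : R.PosDef) (hQL : (Q - Lᵀ * R⁻¹ * L).PosSemidef) :
    (fromBlocks Q Lᵀ L R).PosSemidef := by
  have := hR.isUnit.invertible
  have h := PosDef.fromBlocks₂₂ Q Lᵀ hR
  rw [conjTranspose_eq_transpose_of_trivial, transpose_transpose] at h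
  exact h.mpr hQL

theorem posSemidef_riccati [DecidableEq κ] {ν : Type*} [Fintype ν] {K : Matrix ν ν ℝ}
    (hK : K.PosSemidef) (X : Matrix ν ι ℝ) (Y : Matrix ν κ ℝ) {Q : Matrix ι ι ℝ}
    {L : Matrix κ ι ℝ} {R : Matrix κ κ ℝ} (hR : R.PosDef) (hQL : (Q - Lᵀ * R⁻¹ * L).PosSemidef) :
    (Q + Xᵀ * K * X - (L + Yᵀ * K * X)ᵀ * (R + Yᵀ * K * Y)⁻¹ * (L + Yᵀ * K * X)).PosSemidef := by
  have hKt : Kᵀ = K := (isHermitian_iff_isSymm.1 hK.1).eq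
  have hΥ : (R + Yᵀ * K * Y).PosDef :=
    hR.add_posSemidef (by simpa using hK.conjTranspose_mul_mul_same Y)
  have hblock :
      fromBlocks (Q + Xᵀ * K * X) (L + Yᵀ * K * X)ᵀ (L + Yᵀ * K * X) (R + Yᵀ * K * Y) =
        fromBlocks Q Lᵀ L R + (fromCols X Y)ᴴ * K * fromCols X Y := by
    rw [conjTranspose_eq_transpose_of_trivial, transpose_fromCols, fromRows_mul,
      fromRows_mul_fromCols, fromBlocks_add]
    simp only [transpose_add, transpose_mul, transpose_transpose, hKt, Matrix.mul_assoc]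
  have := hΥ.isUnit.invertible
  have h := PosDef.fromBlocks₂₂ (Q + Xᵀ * K * X) (L + Yᵀ * K * X)ᵀ hΥ
  rw [conjTranspose_eq_transpose_of_trivial, transpose_transpose, hblock] at h
  exact h.mp ((fromBlocks_posSemidef_of_schur hR hQL).add (hK.conjTranspose_mul_mul_same _))

end Matrix

section CondExpMatrix

variable {Ω : Type*} {m0 : MeasurableSpace Ω} {μ : Measure Ω} {F : MeasurableSpace Ω}
  {ι : Type*}

/-- `cexpM` for matrices indexed by arbitrary types. -/
noncomputable def condExpMatrix (μ : Measure Ω) (F : MeasurableSpace Ω) {κ : Type*}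
    (X : Ω → Matrix ι κ ℝ) : Ω → Matrix ι κ ℝ :=
  fun w => of fun i j => (μ[fun v => X v i j | F]) w

theorem dotProduct_condExpMatrix_mulVec [Fintype ι] {X : Ω → Matrix ι ι ℝ}
    (hX : ∀ i j, Integrable (fun v => X v i j) μ) (x : ι → ℝ) :
    (fun w => x ⬝ᵥ (condExpMatrix μ F X w *ᵥ x)) =ᵐ[μ] μ[fun v => x ⬝ᵥ (X v *ᵥ x) | F] := by
  have hexpand :
      (fun v => x ⬝ᵥ (X v *ᵥ x)) = ∑ p : ι × ι, (x p.1 * x p.2) • fun v => X v p.1 p.2 := by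
    ext v
    simp only [dotProduct, mulVec, Finset.sum_apply, Pi.smul_apply, smul_eq_mul,
      Fintype.sum_prod_type, Finset.mul_sum]
    exact Finset.sum_congr rfl fun i _ => Finset.sum_congr rfl fun j _ => by ring
  rw [hexpand]
  filter_upwards [condExp_finsetSum (fun (p : ι × ι) _ => (hX p.1 p.2).smul (x p.1 * x p.2)) F,
    ae_all_iff.2 fun p : ι × ι => condExp_smul (x p.1 * x p.2) (fun v => X v p.1 p.2) F]
    with w hsum hsmul
  rw [hsum, Finset.sum_apply]
  simp only [hsmul, condExpMatrix, dotProduct, mulVec, of_apply, Pi.smul_apply, smul_eq_mul,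
    Fintype.sum_prod_type, Finset.mul_sum]
  exact Finset.sum_congr rfl fun i _ => Finset.sum_congr rfl fun j _ => by ring

theorem condExpMatrix_transpose [Finite ι] {X : Ω → Matrix ι ι ℝ} (hX : ∀ᵐ v ∂μ, (X v)ᵀ = X v) :
    ∀ᵐ w ∂μ, (condExpMatrix μ F X w)ᵀ = condExpMatrix μ F X w := by
  have h : ∀ p : ι × ι, μ[fun v => X v p.2 p.1 | F] =ᵐ[μ] μ[fun v => X v p.1 p.2 | F] :=
    fun p => condExp_congr_ae (hX.mono fun v hv => congrFun (congrFun hv p.1) p.2)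
  filter_upwards [ae_all_iff.2 h] with w hw
  ext i j
  exact hw (i, j)

theorem ae_posSemidef_condExpMatrix [Fintype ι] {X : Ω → Matrix ι ι ℝ}
    (hX : ∀ i j, Integrable (fun v => X v i j) μ) (hpsd : ∀ᵐ v ∂μ, (X v).PosSemidef) :
    ∀ᵐ w ∂μ, (condExpMatrix μ F X w).PosSemidef := by
  have hsymm := condExpMatrix_transpose (F := F)
    (hpsd.mono fun v hv => (isHermitian_iff_isSymm.1 hv.1).eq)
  have hnonneg : ∀ x : ι → ℚ, ∀ᵐ w ∂μ, 0 ≤ (fun i => (x i : ℝ)) ⬝ᵥ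
      (condExpMatrix μ F X w *ᵥ fun i => (x i : ℝ)) := fun x => by
    set y : ι → ℝ := fun i => (x i : ℝ)
    have hle : 0 ≤ᵐ[μ] fun v => y ⬝ᵥ (X v *ᵥ y) :=
      hpsd.mono fun v hv => by simpa using hv.dotProduct_mulVec_nonneg y
    filter_upwards [dotProduct_condExpMatrix_mulVec (F := F) hX y, condExp_nonneg hle]
      with w heq hle
    exact heq ▸ hle
  -- there are countably many rational test vectors, so they can all be taken outside the `ae`
  filter_upwards [hsymm, ae_all_iff.2 hnonneg] with w hw hx
  exact posSemidef_of_forall_ratCast_dotProduct_mulVec_nonneg (isHermitian_iff_isSymm.2 hw) hx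

/-- `(1, ω)ᵀ (1, ω) ⊗ T`, whose conditional expectation has the blocks `E[T|F]`, `E[ωT|F]`,
`E[ω²T|F]` of `Υ`, `Λ`, `Δ`. -/
def momentMatrix (ω : Ω → ℝ) (T : Ω → Matrix ι ι ℝ) (v : Ω) : Matrix (ι ⊕ ι) (ι ⊕ ι) ℝ :=
  fromBlocks (T v) (ω v • T v) (ω v • T v) (ω v ^ 2 • T v)

theorem integrable_momentMatrix_apply [IsFiniteMeasure μ] {ω : Ω → ℝ} {T : Ω → Matrix ι ι ℝ}
    (hω : Integrable ω μ) (hω2 : Integrable (fun v => ω v ^ 2) μ)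
    (hT : ∀ i j, AEStronglyMeasurable[m0] (fun v => T v i j) μ) {C : ℝ}
    (hTC : ∀ v i j, |T v i j| ≤ C) (i j : ι ⊕ ι) :
    Integrable (fun v => momentMatrix ω T v i j) μ := by
  have hbound : ∀ i j, ∀ᵐ v ∂μ, ‖T v i j‖ ≤ C := fun i j => ae_of_all _ fun v => hTC v i j
  rcases i with i | i <;> rcases j with j | j
  · exact Integrable.of_bound (hT i j) C (hbound i j)
  · exact hω.mul_bdd (hT i j) (hbound i j)
  · exact hω.mul_bdd (hT i j) (hbound i j)
  · exact hω2.mul_bdd (hT i j) (hbound i j)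

end CondExpMatrix

section Riccati

variable {Ω : Type} {m0 : MeasurableSpace Ω} {μ : Measure Ω} {F : MeasurableSpace Ω} {n m : ℕ}
  {ω : Ω → ℝ} {T : Ω → Matrix (Fin n) (Fin n) ℝ}

theorem condExpMatrix_momentMatrix (w : Ω) :
    condExpMatrix μ F (momentMatrix ω T) w =
      fromBlocks (cexpM μ F T w) (cexpM μ F (fun v => ω v • T v) w)
        (cexpM μ F (fun v => ω v • T v) w) (cexpM μ F (fun v => ω v ^ 2 • T v) w) := by
  ext (i | i) (j | j) <;> rfl

theorem UpsOp_eq (R : Ω → Matrix (Fin m) (Fin m) ℝ) (B E : Ω → Matrix (Fin n) (Fin m) ℝ)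
    (w : Ω) :
    UpsOp μ F ω R B E T w = R w + (fromRows (B w) (E w))ᵀ *
      condExpMatrix μ F (momentMatrix ω T) w * fromRows (B w) (E w) := by
  rw [condExpMatrix_momentMatrix, transpose_fromRows_mul_fromBlocks_mul_fromRows]
  simp only [UpsOp, add_assoc]

theorem LamOp_eq (L : Ω → Matrix (Fin m) (Fin n) ℝ) (A D : Ω → Matrix (Fin n) (Fin n) ℝ)
    (B E : Ω → Matrix (Fin n) (Fin m) ℝ) (w : Ω) :
    LamOp μ F ω L A D B E T w = L w + (fromRows (B w) (E w))ᵀ *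
      condExpMatrix μ F (momentMatrix ω T) w * fromRows (A w) (D w) := by
  rw [condExpMatrix_momentMatrix, transpose_fromRows_mul_fromBlocks_mul_fromRows]
  simp only [LamOp]
  abel

theorem DelOp_eq (Q A D : Ω → Matrix (Fin n) (Fin n) ℝ) (w : Ω) :
    DelOp μ F ω Q A D T w = Q w + (fromRows (A w) (D w))ᵀ *
      condExpMatrix μ F (momentMatrix ω T) w * fromRows (A w) (D w) := by
  rw [condExpMatrix_momentMatrix, transpose_fromRows_mul_fromBlocks_mul_fromRows]
  simp only [DelOp, add_assoc]

theorem ae_posSemidef_riccati_step [IsFiniteMeasure μ] (hω : Integrable ω μ)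
    (hω2 : Integrable (fun v => ω v ^ 2) μ)
    (hT : ∀ i j, AEStronglyMeasurable[m0] (fun v => T v i j) μ) {C : ℝ}
    (hTC : ∀ v i j, |T v i j| ≤ C) (hTpsd : ∀ᵐ v ∂μ, (T v).PosSemidef)
    {Q A D : Ω → Matrix (Fin n) (Fin n) ℝ} {B E : Ω → Matrix (Fin n) (Fin m) ℝ}
    {L : Ω → Matrix (Fin m) (Fin n) ℝ} {R : Ω → Matrix (Fin m) (Fin m) ℝ} {δ : ℝ} (hδ : 0 < δ)
    (hR : ∀ᵐ w ∂μ, (R w - δ • (1 : Matrix (Fin m) (Fin m) ℝ)).PosSemidef)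
    (hQL : ∀ᵐ w ∂μ, (Q w - (L w)ᵀ * (R w)⁻¹ * L w).PosSemidef) :
    ∀ᵐ w ∂μ, (UpsOp μ F ω R B E T w - δ • (1 : Matrix (Fin m) (Fin m) ℝ)).PosSemidef ∧
      (DelOp μ F ω Q A D T w - (LamOp μ F ω L A D B E T w)ᵀ * (UpsOp μ F ω R B E T w)⁻¹ *
        LamOp μ F ω L A D B E T w).PosSemidef := by
  have hK := ae_posSemidef_condExpMatrix (F := F) (integrable_momentMatrix_apply hω hω2 hT hTC)
    (hTpsd.mono fun v hv => posSemidef_fromBlocks_smul hv (ω v))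
  filter_upwards [hK, hR, hQL] with w hKw hRw hQLw
  rw [UpsOp_eq, LamOp_eq, DelOp_eq]
  refine ⟨?_, posSemidef_riccati hKw _ _ (posDef_of_posSemidef_sub_smul_one hδ hRw) hQLw⟩
  rw [add_sub_right_comm]
  exact hRw.add (by simpa using hKw.conjTranspose_mul_mul_same (fromRows (B w) (E w)))

end Riccati

theorem stmt9_general {Ω : Type} [m0 : MeasurableSpace Ω] (μ : Measure Ω) [IsProbabilityMeasure μ]
    {n m : ℕ} (N : ℕ) (δ : ℝ) (hδ : 0 < δ)
    (G : ℕ → MeasurableSpace Ω) (hGle : ∀ k, G k ≤ m0)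
    (wk : ℕ → Ω → ℝ)
    (hwint : ∀ k, Integrable (wk k) μ) (hw2int : ∀ k, Integrable (fun w => wk k w ^ 2) μ)
    (A D : ℕ → Ω → Matrix (Fin n) (Fin n) ℝ) (B E : ℕ → Ω → Matrix (Fin n) (Fin m) ℝ)
    (Q : ℕ → Ω → Matrix (Fin n) (Fin n) ℝ) (L : ℕ → Ω → Matrix (Fin m) (Fin n) ℝ)
    (R : ℕ → Ω → Matrix (Fin m) (Fin m) ℝ) (GN : Ω → Matrix (Fin n) (Fin n) ℝ)
    -- symmetry of the weights and standard positivity assumptions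
    (hGNpos : ∀ᵐ w ∂μ, (GN w).PosSemidef)
    (hRpos : ∀ k < N, ∀ᵐ w ∂μ,
      (R k w - δ • (1 : Matrix (Fin m) (Fin m) ℝ)).PosSemidef)
    (hQLpos : ∀ k < N, ∀ᵐ w ∂μ, (Q k w - (L k w)ᵀ * (R k w)⁻¹ * L k w).PosSemidef)
    -- the Riccati process: bounded, adapted, terminal value and recursion
    (T : ℕ → Ω → Matrix (Fin n) (Fin n) ℝ) (CbT : ℝ)
    (hTmeas : ∀ k ≤ N, ∀ i j, StronglyMeasurable[G k] (fun w => T k w i j))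
    (hTbd : ∀ k ≤ N, ∀ w i j, |T k w i j| ≤ CbT)
    (hTN : T N = GN)
    (hTrec : ∀ k < N, T k =ᵐ[μ] fun w =>
      DelOp μ (G k) (wk k) (Q k) (A k) (D k) (T (k + 1)) w
        - (LamOp μ (G k) (wk k) (L k) (A k) (D k) (B k) (E k) (T (k + 1)) w)ᵀ
            * (UpsOp μ (G k) (wk k) (R k) (B k) (E k) (T (k + 1)) w)⁻¹
            * LamOp μ (G k) (wk k) (L k) (A k) (D k) (B k) (E k) (T (k + 1)) w) :
    (∀ k ≤ N, ∀ᵐ w ∂μ, (T k w)ᵀ = T k w ∧ (T k w).PosSemidef) ∧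
    (∀ k < N, ∀ᵐ w ∂μ,
      (UpsOp μ (G k) (wk k) (R k) (B k) (E k) (T (k + 1)) w
          - δ • (1 : Matrix (Fin m) (Fin m) ℝ)).PosSemidef ∧
      IsUnit (UpsOp μ (G k) (wk k) (R k) (B k) (E k) (T (k + 1)) w)) := by
  have hstep := fun k (hk : k < N) (hT : ∀ᵐ w ∂μ, (T (k + 1) w).PosSemidef) =>
    ae_posSemidef_riccati_step (F := G k) (Q := Q k) (A := A k) (D := D k) (B := B k) (E := E k)
      (hwint k) (hw2int k)
      (fun i j => ((hTmeas (k + 1) hk i j).mono (hGle (k + 1))).aestronglyMeasurable)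
      (hTbd (k + 1) hk) hT hδ (hRpos k hk) (hQLpos k hk)
  have hT : ∀ k ≤ N, ∀ᵐ w ∂μ, (T k w).PosSemidef := fun k hk => by
    induction hk using Nat.decreasingInduction with
    | self => exact hTN ▸ hGNpos
    | of_succ k hk ih =>
      filter_upwards [hstep k hk ih, hTrec k hk] with w hw hrec
      exact hrec ▸ hw.2
  refine ⟨fun k hk => (hT k hk).mono fun w hw => ⟨(isHermitian_iff_isSymm.1 hw.1).eq, hw⟩,
    fun k hk => ?_⟩
  filter_upwards [hstep k hk (hT (k + 1) hk)] with w hw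
  exact ⟨hw.1, (posDef_of_posSemidef_sub_smul_one hδ hw.1).isUnit⟩

/-- under the standard positivity assumptions (`G_N ⪰ 0`, `R_k ⪰ δ I`,
`Q_k - L_kᵀ R_k⁻¹ L_k ⪰ 0`) and boundedness/adaptedness of all data, a process `T`
satisfying the backward stochastic Riccati recursion
`T_N = G_N`, `T_k = Δ(T_{k+1}) - Λ(T_{k+1})ᵀ Υ(T_{k+1})⁻¹ Λ(T_{k+1})` consists a.s. of
symmetric positive semidefinite matrices with `Υ(T_{k+1}) ⪰ δ I`; in particular
`Υ(T_{k+1})` is invertible at each step. -/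
theorem stmt9 {Ω : Type} [m0 : MeasurableSpace Ω] (μ : Measure Ω) [IsProbabilityMeasure μ]
    {n m : ℕ} (N : ℕ) (δ : ℝ) (hδ : 0 < δ)
    (G : ℕ → MeasurableSpace Ω) (hGle : ∀ k, G k ≤ m0) (hGmono : Monotone G)
    (wk : ℕ → Ω → ℝ)
    (hwmeas : ∀ k, StronglyMeasurable[G (k + 1)] (wk k))
    (hwint : ∀ k, Integrable (wk k) μ) (hw2int : ∀ k, Integrable (fun w => wk k w ^ 2) μ)
    (hw0 : ∀ k, μ[wk k | G k] =ᵐ[μ] fun _ => 0)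
    (hw2 : ∀ k, μ[(fun w => wk k w ^ 2) | G k] =ᵐ[μ] fun _ => 1)
    (A D : ℕ → Ω → Matrix (Fin n) (Fin n) ℝ) (B E : ℕ → Ω → Matrix (Fin n) (Fin m) ℝ)
    (Q : ℕ → Ω → Matrix (Fin n) (Fin n) ℝ) (L : ℕ → Ω → Matrix (Fin m) (Fin n) ℝ)
    (R : ℕ → Ω → Matrix (Fin m) (Fin m) ℝ) (GN : Ω → Matrix (Fin n) (Fin n) ℝ)
    (Cb : ℝ)
    (hmeas : ∀ k < N, ∀ i j,
      StronglyMeasurable[G k] (fun w => A k w i j) ∧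
      StronglyMeasurable[G k] (fun w => D k w i j) ∧
      StronglyMeasurable[G k] (fun w => Q k w i j))
    (hmeasBE : ∀ k < N, ∀ i j,
      StronglyMeasurable[G k] (fun w => B k w i j) ∧
      StronglyMeasurable[G k] (fun w => E k w i j))
    (hmeasLR : ∀ k < N, (∀ i j, StronglyMeasurable[G k] (fun w => L k w i j)) ∧
      ∀ i j, StronglyMeasurable[G k] (fun w => R k w i j))
    (hmeasGN : ∀ i j, StronglyMeasurable[G N] (fun w => GN w i j))
    (hbd : ∀ k < N, ∀ w, (∀ i j, |A k w i j| ≤ Cb) ∧ (∀ i j, |D k w i j| ≤ Cb) ∧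
      (∀ i j, |B k w i j| ≤ Cb) ∧ (∀ i j, |E k w i j| ≤ Cb) ∧
      (∀ i j, |Q k w i j| ≤ Cb) ∧ (∀ i j, |L k w i j| ≤ Cb) ∧ ∀ i j, |R k w i j| ≤ Cb)
    (hbdGN : ∀ w i j, |GN w i j| ≤ Cb)
    -- symmetry of the weights and standard positivity assumptions
    (hQsymm : ∀ k < N, ∀ w, (Q k w)ᵀ = Q k w) (hRsymm : ∀ k < N, ∀ w, (R k w)ᵀ = R k w)
    (hGNsymm : ∀ w, (GN w)ᵀ = GN w)
    (hGNpos : ∀ᵐ w ∂μ, (GN w).PosSemidef)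
    (hRpos : ∀ k < N, ∀ᵐ w ∂μ,
      (R k w - δ • (1 : Matrix (Fin m) (Fin m) ℝ)).PosSemidef)
    (hQLpos : ∀ k < N, ∀ᵐ w ∂μ, (Q k w - (L k w)ᵀ * (R k w)⁻¹ * L k w).PosSemidef)
    -- the Riccati process: bounded, adapted, terminal value and recursion
    (T : ℕ → Ω → Matrix (Fin n) (Fin n) ℝ) (CbT : ℝ)
    (hTmeas : ∀ k ≤ N, ∀ i j, StronglyMeasurable[G k] (fun w => T k w i j))
    (hTbd : ∀ k ≤ N, ∀ w i j, |T k w i j| ≤ CbT)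
    (hTN : T N = GN)
    (hTrec : ∀ k < N, T k =ᵐ[μ] fun w =>
      DelOp μ (G k) (wk k) (Q k) (A k) (D k) (T (k + 1)) w
        - (LamOp μ (G k) (wk k) (L k) (A k) (D k) (B k) (E k) (T (k + 1)) w)ᵀ
            * (UpsOp μ (G k) (wk k) (R k) (B k) (E k) (T (k + 1)) w)⁻¹
            * LamOp μ (G k) (wk k) (L k) (A k) (D k) (B k) (E k) (T (k + 1)) w) :
    (∀ k ≤ N, ∀ᵐ w ∂μ, (T k w)ᵀ = T k w ∧ (T k w).PosSemidef) ∧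
    (∀ k < N, ∀ᵐ w ∂μ,
      (UpsOp μ (G k) (wk k) (R k) (B k) (E k) (T (k + 1)) w
          - δ • (1 : Matrix (Fin m) (Fin m) ℝ)).PosSemidef ∧
      IsUnit (UpsOp μ (G k) (wk k) (R k) (B k) (E k) (T (k + 1)) w)) :=
  stmt9_general (m0 := m0) μ N δ hδ G hGle wk hwint hw2int A D B E Q L R GN hGNpos hRpos hQLpos T
    CbT hTmeas hTbd hTN hTrec
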